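/- (Lemma 3.1) Let g_{12} be an arbitrary 2m×2n complex matrix, set g_{21} = −U_{2n}J_{2n}g_{12}^τ J_{2m}U_{2m}, and form G(λ) and θ as defined. For λ1, λ2 ≠ i/2 with det G(λ) ≠ 0, define û(λ) = −i·(λ1 − i/2)^{-n}(λ2 − i/2)^{-m}·θ(λ)·G(λ)^{-1}·col[0_m; 𝟏_m; 0_n; 𝟏_n]; for μ1, μ2 not in {i/2, −i/2} with det G(μ) ≠ 0, define u(μ) = ((μ1 − i/2)/(μ1 + i/2))^n·((μ2 − i/2)/(μ2 + i/2))^m·û(μ)^τ·diag{J_{2m}U_{2m}, J_{2n}U_{2n}}. Then u(μ)·((λ2 − μ2)P_1 − (λ1 − μ1)P_2)·û(λ) = 0; consequently i(λ1 − μ1)^{-1}u(μ)P_1û(λ) = i(λ2 − μ2)^{-1}u(μ)P_2û(λ) whenever additionally λ1 ≠ μ1 and λ2 ≠ μ2. -/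

import Mathlib

open Matrix

noncomputable section

/-- The scalar sequence `a_r`: `0` for `r < 0`, `i/2` for `r = 0`, `i` for `r > 0`. -/
def aC (r : ℤ) : ℂ := if r < 0 then 0 else if r = 0 then Complex.I / 2 else Complex.I

/-- `A_1`: block matrix `{𝒜_{1,p−q}}` with blocks `0`, `(i/2)I_m`, `i·I_m`. -/
def A1 (m n : ℕ) : Matrix (Fin n × Fin m) (Fin n × Fin m) ℂ :=
  Matrix.of fun r c => if r.2 = c.2 then aC (((r.1 : ℕ) : ℤ) - ((c.1 : ℕ) : ℤ)) else 0

/-- `A_2 = diag{𝒜_{2,0}, …, 𝒜_{2,0}}`. -/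
def A2 (m n : ℕ) : Matrix (Fin n × Fin m) (Fin n × Fin m) ℂ :=
  Matrix.of fun r c => if r.1 = c.1 then aC (((r.2 : ℕ) : ℤ) - ((c.2 : ℕ) : ℤ)) else 0

/-- `𝒜_1 = {a_{j−ℓ}}_{j,ℓ=1}^n`. -/
def calA1 (n : ℕ) : Matrix (Fin n) (Fin n) ℂ :=
  Matrix.of fun p q => aC (((p : ℕ) : ℤ) - ((q : ℕ) : ℤ))

/-- `𝒜_2 = {a_{j−ℓ}}_{j,ℓ=1}^m`. -/
def calA2 (m : ℕ) : Matrix (Fin m) (Fin m) ℂ :=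
  Matrix.of fun j l => aC (((j : ℕ) : ℤ) - ((l : ℕ) : ℤ))

/-- The Toeplitz-block Toeplitz matrix `T`, entry `t_{p−q}^{(j−ℓ)}`. -/
def TBT (m n : ℕ) (t : ℤ → ℤ → ℂ) : Matrix (Fin n × Fin m) (Fin n × Fin m) ℂ :=
  Matrix.of fun r c =>
    t (((r.1 : ℕ) : ℤ) - ((c.1 : ℕ) : ℤ)) (((r.2 : ℕ) : ℤ) - ((c.2 : ℕ) : ℤ))

/-- `M_{11}`: block column, `p`-th block `(1/2)𝒯_0 + Σ_{s=1}^{p−1} 𝒯_s`. -/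
def M11 (m n : ℕ) (t : ℤ → ℤ → ℂ) : Matrix (Fin n × Fin m) (Fin m) ℂ :=
  Matrix.of fun r l => (1 / 2 : ℂ) * t 0 (((r.2 : ℕ) : ℤ) - ((l : ℕ) : ℤ))
    + ∑ s ∈ Finset.range (r.1 : ℕ), t ((s : ℤ) + 1) (((r.2 : ℕ) : ℤ) - ((l : ℕ) : ℤ))

/-- `M_{21} = [I_m I_m … I_m]`. -/
def M21 (m n : ℕ) : Matrix (Fin m) (Fin n × Fin m) ℂ :=
  Matrix.of fun j c => if j = c.2 then 1 else 0

/-- `M_{31} = M_{21}^*`. -/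
def M31 (m n : ℕ) : Matrix (Fin n × Fin m) (Fin m) ℂ := (M21 m n)ᴴ

/-- `M_{41}`: block row, `q`-th block `(1/2)𝒯_0 + Σ_{s=1}^{q−1} 𝒯_{−s}`. -/
def M41 (m n : ℕ) (t : ℤ → ℤ → ℂ) : Matrix (Fin m) (Fin n × Fin m) ℂ :=
  Matrix.of fun j c => (1 / 2 : ℂ) * t 0 (((j : ℕ) : ℤ) - ((c.2 : ℕ) : ℤ))
    + ∑ s ∈ Finset.range (c.1 : ℕ), t (-((s : ℤ) + 1)) (((j : ℕ) : ℤ) - ((c.2 : ℕ) : ℤ))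

/-- `j`-th entry of the column `ℳ_{12}^{(r)}`. -/
def m12e (m : ℕ) (t : ℤ → ℤ → ℂ) (r : ℤ) (j : Fin m) : ℂ :=
  (1 / 2 : ℂ) * t r 0 + ∑ s ∈ Finset.range (j : ℕ), t r ((s : ℤ) + 1)

/-- `ℓ`-th entry of the row `ℳ_{42}^{(r)}`. -/
def m42e (m : ℕ) (t : ℤ → ℤ → ℂ) (r : ℤ) (l : Fin m) : ℂ :=
  (1 / 2 : ℂ) * t r 0 + ∑ s ∈ Finset.range (l : ℕ), t r (-((s : ℤ) + 1))

/-- `M_{12} = {ℳ_{12}^{(p−q)}}`. -/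
def M12 (m n : ℕ) (t : ℤ → ℤ → ℂ) : Matrix (Fin n × Fin m) (Fin n) ℂ :=
  Matrix.of fun r q => m12e m t (((r.1 : ℕ) : ℤ) - ((q : ℕ) : ℤ)) r.2

/-- `M_{22}`. -/
def M22 (m n : ℕ) : Matrix (Fin n) (Fin n × Fin m) ℂ :=
  Matrix.of fun p c => if p = c.1 then 1 else 0

/-- `M_{32} = M_{22}^*`. -/
def M32 (m n : ℕ) : Matrix (Fin n × Fin m) (Fin n) ℂ := (M22 m n)ᴴ

/-- `M_{42} = {ℳ_{42}^{(p−q)}}`. -/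
def M42 (m n : ℕ) (t : ℤ → ℤ → ℂ) : Matrix (Fin n) (Fin n × Fin m) ℂ :=
  Matrix.of fun p c => m42e m t (((p : ℕ) : ℤ) - ((c.1 : ℕ) : ℤ)) c.2

/-- `K`: the `1×mn` row, `q`-th block `(1/2)ℳ_{42}^{(0)} + Σ_{s=1}^{q−1} ℳ_{42}^{(−s)}`. -/
def Krow (m n : ℕ) (t : ℤ → ℤ → ℂ) : (Fin n × Fin m) → ℂ :=
  fun c => (1 / 2 : ℂ) * m42e m t 0 c.2
    + ∑ s ∈ Finset.range (c.1 : ℕ), m42e m t (-((s : ℤ) + 1)) c.2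

/-- `K_{11}`: `p`-th row `(1/2)ℳ_{42}^{(0)} + Σ_{s=1}^{p−1} ℳ_{42}^{(s)}`. -/
def K11 (m n : ℕ) (t : ℤ → ℤ → ℂ) : Matrix (Fin n) (Fin m) ℂ :=
  Matrix.of fun p l => (1 / 2 : ℂ) * m42e m t 0 l
    + ∑ s ∈ Finset.range (p : ℕ), m42e m t ((s : ℤ) + 1) l

/-- `K_{12}`: `q`-th column `(1/2)ℳ_{12}^{(0)} + Σ_{s=1}^{q−1} ℳ_{12}^{(−s)}`. -/
def K12 (m n : ℕ) (t : ℤ → ℤ → ℂ) : Matrix (Fin m) (Fin n) ℂ :=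
  Matrix.of fun j q => (1 / 2 : ℂ) * m12e m t 0 j
    + ∑ s ∈ Finset.range (q : ℕ), m12e m t (-((s : ℤ) + 1)) j

/-- `Π_1 = [M_{11} M_{31}]`. -/
def Pi1 (m n : ℕ) (t : ℤ → ℤ → ℂ) : Matrix (Fin n × Fin m) (Fin m ⊕ Fin m) ℂ :=
  fromCols (M11 m n t) (M31 m n)

/-- `Π_2 = [M_{12} M_{32}]`. -/
def Pi2 (m n : ℕ) (t : ℤ → ℤ → ℂ) : Matrix (Fin n × Fin m) (Fin n ⊕ Fin n) ℂ :=
  fromCols (M12 m n t) (M32 m n)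

/-- `Π̂_1 = col[M_{21}; M_{41}]`. -/
def PiHat1 (m n : ℕ) (t : ℤ → ℤ → ℂ) : Matrix (Fin m ⊕ Fin m) (Fin n × Fin m) ℂ :=
  fromRows (M21 m n) (M41 m n t)

/-- `Π̂_2 = col[M_{22}; M_{42}]`. -/
def PiHat2 (m n : ℕ) (t : ℤ → ℤ → ℂ) : Matrix (Fin n ⊕ Fin n) (Fin n × Fin m) ℂ :=
  fromRows (M22 m n) (M42 m n t)

/-- All-ones vector. -/
def onesV (k : Type*) : k → ℂ := fun _ => 1

/-- `g_{12} = i·Π̂_1 T^{-1} Π_2 − i·[[𝟏_m 𝟏_n^*, 0],[K_{12}, 0]]`. -/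
def g12M (m n : ℕ) (t : ℤ → ℤ → ℂ) : Matrix (Fin m ⊕ Fin m) (Fin n ⊕ Fin n) ℂ :=
  Complex.I • (PiHat1 m n t * (TBT m n t)⁻¹ * Pi2 m n t)
    - Complex.I • fromBlocks (vecMulVec (onesV (Fin m)) (onesV (Fin n))) 0 (K12 m n t) 0

/-- `g_{21} = i·Π̂_2 T^{-1} Π_1 − i·[[𝟏_n 𝟏_m^*, 0],[K_{11}, 0]]`. -/
def g21M (m n : ℕ) (t : ℤ → ℤ → ℂ) : Matrix (Fin n ⊕ Fin n) (Fin m ⊕ Fin m) ℂ :=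
  Complex.I • (PiHat2 m n t * (TBT m n t)⁻¹ * Pi1 m n t)
    - Complex.I • fromBlocks (vecMulVec (onesV (Fin n)) (onesV (Fin m))) 0 (K11 m n t) 0

/-- The `k×k` flip (anti-diagonal) matrix. -/
def flipU (k : ℕ) : Matrix (Fin k) (Fin k) ℂ :=
  Matrix.of fun p q => if (p : ℕ) + (q : ℕ) + 1 = k then 1 else 0

/-- `U_{2k}`, the `2k×2k` flip matrix on the sum type. -/
def U2 (k : ℕ) : Matrix (Fin k ⊕ Fin k) (Fin k ⊕ Fin k) ℂ :=
  fromBlocks 0 (flipU k) (flipU k) 0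

/-- `J_{2k} = diag{I_k, −I_k}`. -/
def J2 (k : ℕ) : Matrix (Fin k ⊕ Fin k) (Fin k ⊕ Fin k) ℂ :=
  fromBlocks 1 0 0 (-1)

/-- `U = U_{mn}`, the `mn×mn` flip matrix (global index `m·p + j`). -/
def UmnM (m n : ℕ) : Matrix (Fin n × Fin m) (Fin n × Fin m) ℂ :=
  Matrix.of fun r c =>
    if m * (r.1 : ℕ) + (r.2 : ℕ) + (m * (c.1 : ℕ) + (c.2 : ℕ)) + 1 = m * n then 1 else 0

/-- `ψ(λ) = (λ + i/2)/(λ − i/2)`. -/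
def psiM (l : ℂ) : ℂ := (l + Complex.I / 2) / (l - Complex.I / 2)

/-- `h(y_1, y_2)`, entry `y_1^{p−1} y_2^{j−1}`. -/
def hVec (m n : ℕ) (y1 y2 : ℂ) : (Fin n × Fin m) → ℂ :=
  fun r => y1 ^ (r.1 : ℕ) * y2 ^ (r.2 : ℕ)

/-- `ω(λ,μ) = 𝟏^*(A_1^*−μ_1)^{-1}(A_2^*−μ_2)^{-1}T^{-1}(A_2−λ_2)^{-1}(A_1−λ_1)^{-1}𝟏`. -/
def omegaF (m n : ℕ) (t : ℤ → ℤ → ℂ) (l1 l2 u1 u2 : ℂ) : ℂ :=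
  star (onesV (Fin n × Fin m)) ⬝ᵥ
    ((((A1 m n)ᴴ - u1 • 1)⁻¹ * ((A2 m n)ᴴ - u2 • 1)⁻¹ * (TBT m n t)⁻¹ *
      (A2 m n - l2 • 1)⁻¹ * (A1 m n - l1 • 1)⁻¹) *ᵥ onesV (Fin n × Fin m))

/-- `ρ(y,z) = h(conj z_1, conj z_2)^* T^{-1} h(y_1,y_2)`. -/
def rhoF (m n : ℕ) (t : ℤ → ℤ → ℂ) (y1 y2 z1 z2 : ℂ) : ℂ :=
  star (hVec m n ((starRingEnd ℂ) z1) ((starRingEnd ℂ) z2)) ⬝ᵥ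
    ((TBT m n t)⁻¹ *ᵥ hVec m n y1 y2)

/-- `Γ_1 = T^{-1}Π_1`. -/
def Gam1 (m n : ℕ) (t : ℤ → ℤ → ℂ) : Matrix (Fin n × Fin m) (Fin m ⊕ Fin m) ℂ :=
  (TBT m n t)⁻¹ * Pi1 m n t

/-- `Γ_2 = T^{-1}Π_2`. -/
def Gam2 (m n : ℕ) (t : ℤ → ℤ → ℂ) : Matrix (Fin n × Fin m) (Fin n ⊕ Fin n) ℂ :=
  (TBT m n t)⁻¹ * Pi2 m n t

/-- `Γ̂_1 = Π̂_1 T^{-1}`. -/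
def GamHat1 (m n : ℕ) (t : ℤ → ℤ → ℂ) : Matrix (Fin m ⊕ Fin m) (Fin n × Fin m) ℂ :=
  PiHat1 m n t * (TBT m n t)⁻¹

/-- `Γ̂_2 = Π̂_2 T^{-1}`. -/
def GamHat2 (m n : ℕ) (t : ℤ → ℤ → ℂ) : Matrix (Fin n ⊕ Fin n) (Fin n × Fin m) ℂ :=
  PiHat2 m n t * (TBT m n t)⁻¹

/-- `Γ = [Γ_1 Γ_2]`. -/
def GammaFull (m n : ℕ) (t : ℤ → ℤ → ℂ) :
    Matrix (Fin n × Fin m) ((Fin m ⊕ Fin m) ⊕ (Fin n ⊕ Fin n)) ℂ :=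
  fromCols (Gam1 m n t) (Gam2 m n t)

/-- `Γ̂ = col[Γ̂_1; Γ̂_2]`. -/
def GammaHatFull (m n : ℕ) (t : ℤ → ℤ → ℂ) :
    Matrix ((Fin m ⊕ Fin m) ⊕ (Fin n ⊕ Fin n)) (Fin n × Fin m) ℂ :=
  fromRows (GamHat1 m n t) (GamHat2 m n t)

/-- The row vector `u(μ)`. -/
def uRow (m n : ℕ) (t : ℤ → ℤ → ℂ) (u1 u2 : ℂ) :
    ((Fin m ⊕ Fin m) ⊕ (Fin n ⊕ Fin n)) → ℂ :=
  star (onesV (Fin n × Fin m)) ᵥ*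
      (((A1 m n)ᴴ - u1 • 1)⁻¹ * ((A2 m n)ᴴ - u2 • 1)⁻¹ * GammaFull m n t)
    - Complex.I • Sum.elim
        (Sum.elim (star (onesV (Fin m)) ᵥ* ((calA2 m)ᴴ - u2 • 1)⁻¹) (0 : Fin m → ℂ))
        (Sum.elim (star (onesV (Fin n)) ᵥ* ((calA1 n)ᴴ - u1 • 1)⁻¹) (0 : Fin n → ℂ))

/-- The column vector `û(λ)`. -/
def uHatCol (m n : ℕ) (t : ℤ → ℤ → ℂ) (l1 l2 : ℂ) :
    ((Fin m ⊕ Fin m) ⊕ (Fin n ⊕ Fin n)) → ℂ :=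
  (GammaHatFull m n t * (A2 m n - l2 • 1)⁻¹ * (A1 m n - l1 • 1)⁻¹) *ᵥ onesV (Fin n × Fin m)
    + Complex.I • Sum.elim
        (Sum.elim (0 : Fin m → ℂ) ((calA2 m - l2 • 1)⁻¹ *ᵥ onesV (Fin m)))
        (Sum.elim (0 : Fin n → ℂ) ((calA1 n - l1 • 1)⁻¹ *ᵥ onesV (Fin n)))

/-- `P_1 = diag{I_{2m}, 0}`. -/
def P1M (m n : ℕ) :
    Matrix ((Fin m ⊕ Fin m) ⊕ (Fin n ⊕ Fin n)) ((Fin m ⊕ Fin m) ⊕ (Fin n ⊕ Fin n)) ℂ :=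
  fromBlocks 1 0 0 0

/-- `P_2 = I − P_1`. -/
def P2M (m n : ℕ) :
    Matrix ((Fin m ⊕ Fin m) ⊕ (Fin n ⊕ Fin n)) ((Fin m ⊕ Fin m) ⊕ (Fin n ⊕ Fin n)) ℂ :=
  1 - P1M m n

/-- `G(λ)`, built from `g_{12}` and `g_{21}`. -/
def GMat (m n : ℕ) (g12 : Matrix (Fin m ⊕ Fin m) (Fin n ⊕ Fin n) ℂ)
    (g21 : Matrix (Fin n ⊕ Fin n) (Fin m ⊕ Fin m) ℂ) (l1 l2 : ℂ) :
    Matrix ((Fin m ⊕ Fin m) ⊕ (Fin n ⊕ Fin n)) ((Fin m ⊕ Fin m) ⊕ (Fin n ⊕ Fin n)) ℂ :=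
  fromBlocks (fromBlocks (calA2 m - l2 • 1) 0 0 (calA2 m - l2 • 1)) g12
             g21 (fromBlocks (calA1 n - l1 • 1) 0 0 (calA1 n - l1 • 1))

/-- `G` as a matrix over the polynomial ring `ℂ[λ_1, λ_2]` (variables `X 0 = λ_1`, `X 1 = λ_2`). -/
def GPoly (m n : ℕ) (g12 : Matrix (Fin m ⊕ Fin m) (Fin n ⊕ Fin n) ℂ)
    (g21 : Matrix (Fin n ⊕ Fin n) (Fin m ⊕ Fin m) ℂ) :
    Matrix ((Fin m ⊕ Fin m) ⊕ (Fin n ⊕ Fin n)) ((Fin m ⊕ Fin m) ⊕ (Fin n ⊕ Fin n))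
      (MvPolynomial (Fin 2) ℂ) :=
  fromBlocks
    (fromBlocks ((calA2 m).map MvPolynomial.C - (MvPolynomial.X 1 : MvPolynomial (Fin 2) ℂ) • 1) 0 0
      ((calA2 m).map MvPolynomial.C - (MvPolynomial.X 1 : MvPolynomial (Fin 2) ℂ) • 1))
    (g12.map MvPolynomial.C)
    (g21.map MvPolynomial.C)
    (fromBlocks ((calA1 n).map MvPolynomial.C - (MvPolynomial.X 0 : MvPolynomial (Fin 2) ℂ) • 1) 0 0
      ((calA1 n).map MvPolynomial.C - (MvPolynomial.X 0 : MvPolynomial (Fin 2) ℂ) • 1))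

/-- The vector `col[0_m; 𝟏_m; 0_n; 𝟏_n]`. -/
def eVec (m n : ℕ) : ((Fin m ⊕ Fin m) ⊕ (Fin n ⊕ Fin n)) → ℂ :=
  Sum.elim (Sum.elim (0 : Fin m → ℂ) (onesV (Fin m))) (Sum.elim (0 : Fin n → ℂ) (onesV (Fin n)))

/-- `diag{J_{2m}U_{2m}, J_{2n}U_{2n}}`. -/
def DJU (m n : ℕ) :
    Matrix ((Fin m ⊕ Fin m) ⊕ (Fin n ⊕ Fin n)) ((Fin m ⊕ Fin m) ⊕ (Fin n ⊕ Fin n)) ℂ :=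
  fromBlocks (J2 m * U2 m) 0 0 (J2 n * U2 n)

/-- The block column `col[I_m; I_m; …; I_m]`. -/
def EcolId (m n : ℕ) : Matrix (Fin n × Fin m) (Fin m) ℂ :=
  Matrix.of fun r l => if r.2 = l then 1 else 0


/-!
Put `D̂ = diag{J_{2m}U_{2m}, −J_{2n}U_{2n}}`. The relation between `g_{12}` and `g_{21}`, together
with the persymmetry of the Toeplitz matrices `𝒜_k`, makes `D̂ G(λ)` skew-symmetric for every `λ`.
Since `diag{J_{2m}U_{2m}, J_{2n}U_{2n}} ((λ₂ − μ₂)P_1 − (λ₁ − μ₁)P_2) = D̂ (G(μ) − G(λ))`, the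
product `u(μ)(…)û(λ)` is a scalar multiple of `wᵀ D̂ (G(μ) − G(λ)) v` with `G(μ)w = G(λ)v = e`,
which equals `eᵀ D̂ v − wᵀ D̂ e = vᵀ D̂ G(λ) v − wᵀ D̂ G(μ) w`, and both terms vanish by
skew-symmetry.
-/
namespace Matrix

variable {ι R : Type*} [Fintype ι] [CommRing R]

theorem dotProduct_mulVec_mulVec_self_eq_zero [NoZeroDivisors R] [CharZero R]
    {D A : Matrix ι ι R} (hD : Dᵀ = -D) (hDA : D * A = Aᵀ * D) (x : ι → R) :
    x ⬝ᵥ (D *ᵥ (A *ᵥ x)) = 0 := by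
  have hskew : (D * A)ᵀ = -(D * A) := by
    rw [transpose_mul, hD, Matrix.mul_neg, ← hDA]
  have h : x ⬝ᵥ ((D * A) *ᵥ x) = -(x ⬝ᵥ ((D * A) *ᵥ x)) := by
    conv_lhs => rw [dotProduct_mulVec, ← mulVec_transpose, hskew, neg_mulVec,
      neg_dotProduct, dotProduct_comm]
  rw [mulVec_mulVec]
  rwa [CharZero.eq_neg_self_iff] at h

theorem dotProduct_mul_sub_mulVec_eq_zero [NoZeroDivisors R] [CharZero R]
    {D A B : Matrix ι ι R} (hD : Dᵀ = -D) (hDA : D * A = Aᵀ * D) (hDB : D * B = Bᵀ * D)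
    {w v e : ι → R} (hw : A *ᵥ w = e) (hv : B *ᵥ v = e) :
    w ⬝ᵥ ((D * (A - B)) *ᵥ v) = 0 := by
  have hA : w ⬝ᵥ ((D * A) *ᵥ v) = 0 := by
    rw [hDA, ← mulVec_mulVec, dotProduct_mulVec, vecMul_transpose, hw, ← hv,
      dotProduct_mulVec, ← mulVec_transpose, hD, neg_mulVec, neg_dotProduct, dotProduct_comm,
      dotProduct_mulVec_mulVec_self_eq_zero hD hDB, neg_zero]
  have hB : w ⬝ᵥ ((D * B) *ᵥ v) = 0 := by
    rw [← mulVec_mulVec, hv, ← hw, dotProduct_mulVec_mulVec_self_eq_zero hD hDA]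
  rw [Matrix.mul_sub, sub_mulVec, dotProduct_sub, hA, hB, sub_zero]

end Matrix

section Flip

variable {k : ℕ}

theorem flipU_apply (i j : Fin k) : flipU k i j = if j = i.rev then 1 else 0 := by
  simp only [flipU, of_apply, Fin.ext_iff, Fin.val_rev]
  exact if_congr (by omega) rfl rfl

theorem flipU_mul (B : Matrix (Fin k) (Fin k) ℂ) : flipU k * B = B.submatrix Fin.rev id := by
  ext i j
  simp [mul_apply, flipU_apply]

theorem flipU_transpose : (flipU k)ᵀ = flipU k := by
  ext i j
  simp only [transpose_apply, flipU, of_apply]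
  exact if_congr (by omega) rfl rfl

theorem mul_flipU (B : Matrix (Fin k) (Fin k) ℂ) : B * flipU k = B.submatrix id Fin.rev := by
  rw [← transpose_transpose (B * flipU k), transpose_mul, flipU_transpose, flipU_mul]
  rfl

theorem flipU_mul_flipU : flipU k * flipU k = 1 := by
  ext i j
  simp [flipU_mul, flipU_apply, one_apply, eq_comm]

theorem flipU_mul_toeplitz (a : ℤ → ℂ) :
    flipU k * of (fun i j : Fin k => a ((i : ℕ) - (j : ℕ) : ℤ))
      = (of fun i j : Fin k => a ((i : ℕ) - (j : ℕ) : ℤ))ᵀ * flipU k := by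
  rw [flipU_mul, mul_flipU]
  ext i j
  simp only [submatrix_apply, transpose_apply, of_apply, id_eq, Fin.val_rev]
  congr 1
  omega

theorem flipU_mul_calA2_sub_smul (x : ℂ) :
    flipU k * (calA2 k - x • 1) = (calA2 k - x • 1)ᵀ * flipU k := by
  rw [Matrix.mul_sub, Matrix.mul_smul, Matrix.mul_one, calA2, flipU_mul_toeplitz,
    transpose_sub, transpose_smul, transpose_one, Matrix.sub_mul, Matrix.smul_mul,
    Matrix.one_mul]

end Flip

section JU

variable (k : ℕ)

theorem J2_mul_U2 : J2 k * U2 k = fromBlocks 0 (flipU k) (-flipU k) 0 := by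
  simp [J2, U2, fromBlocks_multiply]

theorem transpose_J2_mul_U2 : (J2 k * U2 k)ᵀ = -(J2 k * U2 k) := by
  simp [J2_mul_U2, fromBlocks_transpose, fromBlocks_neg, flipU_transpose]

theorem J2_mul_U2_mul_self : (J2 k * U2 k) * (J2 k * U2 k) = -1 := by
  simp [J2_mul_U2, fromBlocks_multiply, flipU_mul_flipU, ← fromBlocks_one, fromBlocks_neg]

theorem U2_mul_J2 : U2 k * J2 k = -(J2 k * U2 k) := by
  simp [U2, J2, fromBlocks_multiply, fromBlocks_neg]

variable {k}

theorem J2_mul_U2_mul_fromBlocks_diag {B : Matrix (Fin k) (Fin k) ℂ}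
    (hB : flipU k * B = Bᵀ * flipU k) :
    (J2 k * U2 k) * fromBlocks B 0 0 B = (fromBlocks B 0 0 B)ᵀ * (J2 k * U2 k) := by
  simp [J2_mul_U2, fromBlocks_multiply, fromBlocks_transpose, hB]

end JU

section SkewForm

variable {m n : ℕ} {g12 : Matrix (Fin m ⊕ Fin m) (Fin n ⊕ Fin n) ℂ}
  {g21 : Matrix (Fin n ⊕ Fin n) (Fin m ⊕ Fin m) ℂ}

theorem g21_eq_J2_mul_U2 (hg : g21 = -(U2 n * J2 n * g12ᵀ * J2 m * U2 m)) :
    g21 = (J2 n * U2 n) * g12ᵀ * (J2 m * U2 m) := by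
  rw [hg, U2_mul_J2]
  simp only [Matrix.neg_mul, neg_neg, Matrix.mul_assoc]

/-- The sign of the second block, absent in `DJU`, is what makes `DHat * G(λ)` skew-symmetric. -/
def DHat (m n : ℕ) :
    Matrix ((Fin m ⊕ Fin m) ⊕ (Fin n ⊕ Fin n)) ((Fin m ⊕ Fin m) ⊕ (Fin n ⊕ Fin n)) ℂ :=
  fromBlocks (J2 m * U2 m) 0 0 (-(J2 n * U2 n))

theorem transpose_DHat (m n : ℕ) : (DHat m n)ᵀ = -DHat m n := by
  rw [DHat, fromBlocks_transpose, transpose_neg, transpose_J2_mul_U2, transpose_J2_mul_U2]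
  simp [fromBlocks_neg]

theorem DHat_mul_GMat (hg : g21 = -(U2 n * J2 n * g12ᵀ * J2 m * U2 m)) (x1 x2 : ℂ) :
    DHat m n * GMat m n g12 g21 x1 x2 = (GMat m n g12 g21 x1 x2)ᵀ * DHat m n := by
  have hg' := g21_eq_J2_mul_U2 hg
  have h12 : (J2 m * U2 m) * g12 = -(g21ᵀ * (J2 n * U2 n)) := by
    rw [hg', transpose_mul (J2 n * U2 n * g12ᵀ), transpose_mul (J2 n * U2 n),
      transpose_transpose, transpose_J2_mul_U2, transpose_J2_mul_U2]
    simp only [Matrix.neg_mul, Matrix.mul_neg, neg_neg]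
    rw [Matrix.mul_assoc (J2 m * U2 m), Matrix.mul_assoc g12, J2_mul_U2_mul_self, Matrix.mul_neg,
      Matrix.mul_one, Matrix.mul_neg, neg_neg]
  have h21 : -((J2 n * U2 n) * g21) = g12ᵀ * (J2 m * U2 m) := by
    rw [hg', Matrix.mul_assoc (J2 n * U2 n) g12ᵀ, ← Matrix.mul_assoc (J2 n * U2 n) (J2 n * U2 n),
      J2_mul_U2_mul_self, Matrix.neg_mul, Matrix.one_mul, neg_neg]
  rw [GMat, DHat, fromBlocks_transpose, fromBlocks_multiply, fromBlocks_multiply]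
  simp only [Matrix.zero_mul, Matrix.mul_zero, add_zero, zero_add, Matrix.neg_mul,
    Matrix.mul_neg]
  refine fromBlocks_inj.mpr ⟨?_, ?_, h21, ?_⟩
  · exact J2_mul_U2_mul_fromBlocks_diag (flipU_mul_calA2_sub_smul x2)
  · exact h12
  · exact congrArg Neg.neg (J2_mul_U2_mul_fromBlocks_diag (flipU_mul_calA2_sub_smul x1))

theorem DJU_mul_sub_eq_DHat_mul_GMat_sub (l1 l2 u1 u2 : ℂ) :
    DJU m n * ((l2 - u2) • P1M m n - (l1 - u1) • P2M m n)
      = DHat m n * (GMat m n g12 g21 u1 u2 - GMat m n g12 g21 l1 l2) := by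
  have hP : (l2 - u2) • P1M m n - (l1 - u1) • P2M m n
      = fromBlocks ((l2 - u2) • 1) 0 0 (-((l1 - u1) • 1)) := by
    simp [P2M, P1M, ← fromBlocks_one, sub_eq_add_neg, fromBlocks_smul, fromBlocks_neg,
      fromBlocks_add]
  have hG : GMat m n g12 g21 u1 u2 - GMat m n g12 g21 l1 l2
      = fromBlocks ((l2 - u2) • 1) 0 0 ((l1 - u1) • 1) := by
    simp only [GMat, ← fromBlocks_one, fromBlocks_smul, smul_zero, sub_eq_add_neg,
      fromBlocks_neg, fromBlocks_add, add_neg_cancel, add_zero, neg_zero, fromBlocks_inj,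
      true_and, and_self]
    constructor <;> module
  rw [hP, hG, DJU, DHat, fromBlocks_multiply, fromBlocks_multiply]
  simp

end SkewForm

theorem omega_well_defined_general (m n : ℕ)
    (g12 : Matrix (Fin m ⊕ Fin m) (Fin n ⊕ Fin n) ℂ)
    (g21 : Matrix (Fin n ⊕ Fin n) (Fin m ⊕ Fin m) ℂ)
    (hg : g21 = -(U2 n * J2 n * g12ᵀ * J2 m * U2 m))
    (θ : MvPolynomial (Fin 2) ℂ)
    (l1 l2 u1 u2 : ℂ)
    (hGl : (GMat m n g12 g21 l1 l2).det ≠ 0) (hGu : (GMat m n g12 g21 u1 u2).det ≠ 0)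
    (uh ux : ((Fin m ⊕ Fin m) ⊕ (Fin n ⊕ Fin n)) → ℂ)
    (huh : uh = (-Complex.I * ((l1 - Complex.I / 2) ^ n)⁻¹ * ((l2 - Complex.I / 2) ^ m)⁻¹ *
        MvPolynomial.eval ![l1, l2] θ) • ((GMat m n g12 g21 l1 l2)⁻¹ *ᵥ eVec m n))
    (hux : ux = (((u1 - Complex.I / 2) / (u1 + Complex.I / 2)) ^ n *
        ((u2 - Complex.I / 2) / (u2 + Complex.I / 2)) ^ m) •
        (((-Complex.I * ((u1 - Complex.I / 2) ^ n)⁻¹ * ((u2 - Complex.I / 2) ^ m)⁻¹ *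
            MvPolynomial.eval ![u1, u2] θ) • ((GMat m n g12 g21 u1 u2)⁻¹ *ᵥ eVec m n))
          ᵥ* DJU m n)) :
    ux ⬝ᵥ (((l2 - u2) • P1M m n - (l1 - u1) • P2M m n) *ᵥ uh) = 0 ∧
    (l1 ≠ u1 → l2 ≠ u2 →
      Complex.I * (l1 - u1)⁻¹ * (ux ⬝ᵥ (P1M m n *ᵥ uh))
        = Complex.I * (l2 - u2)⁻¹ * (ux ⬝ᵥ (P2M m n *ᵥ uh))) := by
  have hsolve {x1 x2 : ℂ} (h : (GMat m n g12 g21 x1 x2).det ≠ 0) :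
      GMat m n g12 g21 x1 x2 *ᵥ ((GMat m n g12 g21 x1 x2)⁻¹ *ᵥ eVec m n) = eVec m n := by
    rw [mulVec_mulVec, mul_nonsing_inv _ h.isUnit, one_mulVec]
  have hcore : ((GMat m n g12 g21 u1 u2)⁻¹ *ᵥ eVec m n) ᵥ* DJU m n ⬝ᵥ
      (((l2 - u2) • P1M m n - (l1 - u1) • P2M m n) *ᵥ ((GMat m n g12 g21 l1 l2)⁻¹ *ᵥ eVec m n))
        = 0 := by
    rw [← dotProduct_mulVec, mulVec_mulVec, DJU_mul_sub_eq_DHat_mul_GMat_sub]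
    exact dotProduct_mul_sub_mulVec_eq_zero (transpose_DHat m n) (DHat_mul_GMat hg u1 u2)
      (DHat_mul_GMat hg l1 l2) (hsolve hGu) (hsolve hGl)
  have hzero : ux ⬝ᵥ (((l2 - u2) • P1M m n - (l1 - u1) • P2M m n) *ᵥ uh) = 0 := by
    simp only [hux, huh, smul_vecMul, mulVec_smul, smul_dotProduct, dotProduct_smul,
      smul_eq_mul, hcore, mul_zero]
  refine ⟨hzero, fun h1 h2 => ?_⟩
  rw [sub_mulVec, smul_mulVec, smul_mulVec, dotProduct_sub, dotProduct_smul, dotProduct_smul,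
    smul_eq_mul, smul_eq_mul] at hzero
  have h1' : l1 - u1 ≠ 0 := sub_ne_zero.mpr h1
  have h2' : l2 - u2 ≠ 0 := sub_ne_zero.mpr h2
  field_simp
  linear_combination hzero

/-- Lemma 3.1: the two representations of `ω` built from an arbitrary `g_{12}`
agree. -/
theorem omega_well_defined (m n : ℕ) (hm : 0 < m) (hn : 0 < n)
    (g12 : Matrix (Fin m ⊕ Fin m) (Fin n ⊕ Fin n) ℂ)
    (g21 : Matrix (Fin n ⊕ Fin n) (Fin m ⊕ Fin m) ℂ)
    (hg : g21 = -(U2 n * J2 n * g12ᵀ * J2 m * U2 m))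
    (θ : MvPolynomial (Fin 2) ℂ)
    (hθ1 : θ ^ 2 = (GPoly m n g12 g21).det)
    (hθ2 : MvPolynomial.coeff (Finsupp.single (0 : Fin 2) n + Finsupp.single (1 : Fin 2) m) θ
      = -1)
    (l1 l2 u1 u2 : ℂ)
    (hl1 : l1 ≠ Complex.I / 2) (hl2 : l2 ≠ Complex.I / 2)
    (hu1 : u1 ≠ Complex.I / 2) (hu1' : u1 ≠ -(Complex.I / 2))
    (hu2 : u2 ≠ Complex.I / 2) (hu2' : u2 ≠ -(Complex.I / 2))
    (hGl : (GMat m n g12 g21 l1 l2).det ≠ 0) (hGu : (GMat m n g12 g21 u1 u2).det ≠ 0)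
    (uh ux : ((Fin m ⊕ Fin m) ⊕ (Fin n ⊕ Fin n)) → ℂ)
    (huh : uh = (-Complex.I * ((l1 - Complex.I / 2) ^ n)⁻¹ * ((l2 - Complex.I / 2) ^ m)⁻¹ *
        MvPolynomial.eval ![l1, l2] θ) • ((GMat m n g12 g21 l1 l2)⁻¹ *ᵥ eVec m n))
    (hux : ux = (((u1 - Complex.I / 2) / (u1 + Complex.I / 2)) ^ n *
        ((u2 - Complex.I / 2) / (u2 + Complex.I / 2)) ^ m) •
        (((-Complex.I * ((u1 - Complex.I / 2) ^ n)⁻¹ * ((u2 - Complex.I / 2) ^ m)⁻¹ *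
            MvPolynomial.eval ![u1, u2] θ) • ((GMat m n g12 g21 u1 u2)⁻¹ *ᵥ eVec m n))
          ᵥ* DJU m n)) :
    ux ⬝ᵥ (((l2 - u2) • P1M m n - (l1 - u1) • P2M m n) *ᵥ uh) = 0 ∧
    (l1 ≠ u1 → l2 ≠ u2 →
      Complex.I * (l1 - u1)⁻¹ * (ux ⬝ᵥ (P1M m n *ᵥ uh))
        = Complex.I * (l2 - u2)⁻¹ * (ux ⬝ᵥ (P2M m n *ᵥ uh))) :=
  omega_well_defined_general m n g12 g21 hg θ l1 l2 u1 u2 hGl hGu uh ux huh hux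

end
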